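/- arXiv:2409.03428 — 2 statements merged into one kernel-verified Lean document; each statement's English description precedes it below -/
import Mathlib

section
/- (Ramanujan) Let r₂(n) denote the number of pairs (a, b) ∈ ℤ² with a² + b² = n. For all real numbers a > 0 and b > 0, the two series below converge and are equal: ∑_{n=0}^{∞} r₂(n)/√(n+a) · e^{−2π√((n+a)b)} = ∑_{n=0}^{∞} r₂(n)/√(n+b) · e^{−2π√((n+b)a)}. -/
open Filter

/-- `r₂(n)`: the number of ordered pairs `(a, b) ∈ ℤ²` with `a² + b² = n`. -/
noncomputable def r2 (n : ℕ) : ℕ :=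
  Set.ncard {p : ℤ × ℤ | p.1 ^ 2 + p.2 ^ 2 = (n : ℤ)}

open MeasureTheory Real Set
open scoped ENNReal

namespace RamanujanAux

/-- 1-D change of variables for lower Lebesgue integrals. -/
theorem lintegral_image_eq {s : Set ℝ} {f f' : ℝ → ℝ}
    (hs : MeasurableSet s) (hf' : ∀ x ∈ s, HasDerivWithinAt f (f' x) s x)
    (hf : Set.InjOn f s) (g : ℝ → ℝ≥0∞) :
    ∫⁻ x in f '' s, g x = ∫⁻ x in s, ENNReal.ofReal |f' x| * g (f x) := by
  simpa only [ContinuousLinearMap.det_toSpanSingleton] using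
    MeasureTheory.lintegral_image_eq_lintegral_abs_det_fderiv_mul volume hs
      (fun x hx => (hf' x hx).hasFDerivWithinAt) hf g

theorem fiber_subset (n : ℕ) :
    {p : ℤ × ℤ | p.1 ^ 2 + p.2 ^ 2 = (n : ℤ)} ⊆
      ↑(Finset.Icc (-(n : ℤ)) n ×ˢ Finset.Icc (-(n : ℤ)) n) := by
  rintro ⟨x, y⟩ h
  simp only [Set.mem_setOf_eq] at h
  simp only [Finset.coe_product, Finset.coe_Icc, Set.mem_prod, Set.mem_Icc]
  constructor
  · constructor <;> nlinarith [sq_nonneg x, sq_nonneg y, sq_nonneg (x - 1), sq_nonneg (x + 1)]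
  · constructor <;> nlinarith [sq_nonneg x, sq_nonneg y, sq_nonneg (y - 1), sq_nonneg (y + 1)]

theorem fiber_finite (n : ℕ) : {p : ℤ × ℤ | p.1 ^ 2 + p.2 ^ 2 = (n : ℤ)}.Finite :=
  Set.Finite.subset (Finset.finite_toSet _) (fiber_subset n)

theorem r2_le (n : ℕ) : r2 n ≤ (2 * n + 1) ^ 2 := by
  have h := Set.ncard_le_ncard (fiber_subset n) (Finset.finite_toSet _)
  rw [Set.ncard_coe_finset, Finset.card_product, Int.card_Icc] at h
  refine h.trans ?_
  have : (n : ℤ) + 1 - -(n : ℤ) = ((2 * n + 1 : ℕ) : ℤ) := by push_cast; ring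
  rw [this, Int.toNat_natCast]
  ring_nf
  omega


theorem summable_theta {t : ℝ} (ht : 0 < t) :
    Summable fun n : ℤ => Real.exp (-π * t * (n : ℝ) ^ 2) := by
  have key : Summable fun n : ℕ => Real.exp (-π * t * (n : ℝ) ^ 2) := by
    refine Summable.of_nonneg_of_le (f := fun n : ℕ => Real.exp (-(π * t)) ^ n)
      (fun n => (Real.exp_pos _).le) (fun n => ?_)
      (summable_geometric_of_lt_one (Real.exp_pos _).le
        (Real.exp_lt_one_iff.2 (neg_lt_zero.2 (by positivity))))
    show Real.exp (-π * t * (n : ℝ) ^ 2) ≤ Real.exp (-(π * t)) ^ n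
    rw [← Real.exp_nat_mul]
    apply Real.exp_le_exp.2
    have hpt : 0 < π * t := by positivity
    have h2 : (n : ℝ) ≤ (n : ℝ) ^ 2 := by
      rcases Nat.eq_zero_or_pos n with h | h
      · simp [h]
      · have h1 : (1 : ℝ) ≤ (n : ℝ) := by exact_mod_cast h
        nlinarith
    nlinarith
  refine Summable.of_nat_of_neg (f := fun n : ℤ => Real.exp (-π * t * (n : ℝ) ^ 2)) ?_ ?_
  · exact key.congr fun n => by push_cast; ring_nf
  · exact key.congr fun n => by push_cast; ring_nf

theorem theta_nonneg (t : ℝ) : 0 ≤ ∑' n : ℤ, Real.exp (-π * t * (n : ℝ) ^ 2) :=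
  tsum_nonneg fun n => (Real.exp_pos _).le

theorem theta_inv {t : ℝ} (ht : 0 < t) :
    (∑' n : ℤ, Real.exp (-π * t⁻¹ * (n : ℝ) ^ 2)) =
      Real.sqrt t * ∑' n : ℤ, Real.exp (-π * t * (n : ℝ) ^ 2) := by
  have h := Real.tsum_exp_neg_mul_int_sq ht
  have h2 : (∑' n : ℤ, Real.exp (-π / t * (n : ℝ) ^ 2)) =
      (∑' n : ℤ, Real.exp (-π * t⁻¹ * (n : ℝ) ^ 2)) :=
    tsum_congr fun n => by rw [div_eq_mul_inv]
  rw [h2] at h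
  rw [h, ← mul_assoc]
  have h3 : Real.sqrt t * (1 / t ^ ((1:ℝ) / 2)) = 1 := by
    rw [Real.sqrt_eq_rpow, mul_one_div, div_self (by positivity)]
  rw [h3, one_mul]

theorem card_fiber (n : ℕ) :
    Nat.card {p : ℤ × ℤ // (p.1 ^ 2 + p.2 ^ 2).toNat = n} = r2 n := by
  rw [r2, ← Nat.card_coe_set_eq]
  apply Nat.card_congr
  apply Equiv.subtypeEquiv (Equiv.refl _)
  intro p
  simp only [Equiv.refl_apply, Set.mem_setOf_eq]
  constructor
  · intro h; rw [← h, Int.toNat_of_nonneg (by positivity)]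
  · intro h; rw [h, Int.toNat_natCast]

theorem pow_le_exp {x : ℝ} (hx : 0 ≤ x) : (x / 8) ^ 8 ≤ Real.exp x := by
  have h1 : x / 8 + 1 ≤ Real.exp (x / 8) := Real.add_one_le_exp _
  calc (x / 8) ^ 8 ≤ (x / 8 + 1) ^ 8 := by
        apply pow_le_pow_left₀ (by positivity); linarith
    _ ≤ Real.exp (x / 8) ^ 8 := by apply pow_le_pow_left₀ (by positivity) h1
    _ = Real.exp x := by rw [← Real.exp_nat_mul]; push_cast; ring_nf

theorem summable_main (a b : ℝ) (ha : 0 < a) (hb : 0 < b) :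
    Summable (fun n : ℕ => (r2 n : ℝ) / Real.sqrt ((n : ℝ) + a) *
        Real.exp (-2 * π * Real.sqrt (((n : ℝ) + a) * b))) := by
  set c : ℝ := 2 * π * Real.sqrt b with hc
  have hcpos : 0 < c := by positivity
  set M : ℝ := 9 / Real.sqrt a * (8 ^ 8 / c ^ 8) with hM
  have hMpos : 0 < M := by positivity
  rw [← summable_nat_add_iff 1]
  have hsum : Summable (fun n : ℕ => M * (1 / ((n : ℝ) + 1) ^ 2)) := by
    apply Summable.mul_left
    have := (summable_nat_add_iff (f := fun n : ℕ => 1 / (n : ℝ) ^ 2) 1).2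
      (by simpa using Real.summable_one_div_nat_pow.2 one_lt_two)
    apply this.congr; intro n; push_cast; ring
  refine Summable.of_nonneg_of_le (fun n => by positivity) (fun n => ?_) hsum
  set m : ℝ := (n : ℝ) + 1 with hm
  have hm1 : (1 : ℝ) ≤ m := by simp [hm]
  have hmpos : (0 : ℝ) < m := by linarith
  have hcast : ((n + 1 : ℕ) : ℝ) = m := by push_cast [hm]; ring
  rw [hcast]
  have hb1 : (r2 (n+1) : ℝ) / Real.sqrt (m + a) ≤ 9 * m ^ 2 / Real.sqrt a := by
    apply div_le_div₀ (by positivity) ?_ (Real.sqrt_pos.2 ha)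
      (Real.sqrt_le_sqrt (by linarith))
    calc (r2 (n+1) : ℝ) ≤ ((2 * (n+1) + 1 : ℕ) : ℝ) ^ 2 := by
          exact_mod_cast r2_le (n+1)
      _ = (2 * m + 1) ^ 2 := by push_cast [hm]; ring
      _ ≤ 9 * m ^ 2 := by nlinarith
  have hb2 : Real.exp (-2 * π * Real.sqrt ((m + a) * b)) ≤ 8 ^ 8 / (c ^ 8 * m ^ 4) := by
    have hs : c * Real.sqrt m ≤ 2 * π * Real.sqrt ((m + a) * b) := by
      rw [hc, mul_assoc]
      apply mul_le_mul_of_nonneg_left ?_ (by positivity)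
      calc Real.sqrt b * Real.sqrt m = Real.sqrt (b * m) := (Real.sqrt_mul hb.le m).symm
        _ ≤ Real.sqrt ((m + a) * b) := Real.sqrt_le_sqrt (by nlinarith)
    have hpow : c ^ 8 * m ^ 4 / 8 ^ 8 ≤ Real.exp (c * Real.sqrt m) := by
      have hkey := pow_le_exp (x := c * Real.sqrt m) (by positivity)
      have h8 : Real.sqrt m ^ 8 = m ^ 4 := by
        rw [show (8:ℕ) = 2 * 4 from rfl, pow_mul, Real.sq_sqrt hmpos.le]
      have heq : (c * Real.sqrt m / 8) ^ 8 = c ^ 8 * m ^ 4 / 8 ^ 8 := by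
        rw [div_pow, mul_pow, h8]
      calc c ^ 8 * m ^ 4 / 8 ^ 8 = (c * Real.sqrt m / 8) ^ 8 := heq.symm
        _ ≤ Real.exp (c * Real.sqrt m) := hkey
    calc Real.exp (-2 * π * Real.sqrt ((m + a) * b))
        ≤ Real.exp (-(c * Real.sqrt m)) := by
          apply Real.exp_le_exp.2; rw [neg_mul, neg_mul]; exact neg_le_neg hs
      _ = (Real.exp (c * Real.sqrt m))⁻¹ := by rw [Real.exp_neg]
      _ ≤ (c ^ 8 * m ^ 4 / 8 ^ 8)⁻¹ := by
          apply inv_anti₀ (by positivity) hpow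
      _ = 8 ^ 8 / (c ^ 8 * m ^ 4) := by rw [inv_div]
  calc (r2 (n+1) : ℝ) / Real.sqrt (m + a) * Real.exp (-2 * π * Real.sqrt ((m + a) * b))
      ≤ 9 * m ^ 2 / Real.sqrt a * (8 ^ 8 / (c ^ 8 * m ^ 4)) := by
        apply mul_le_mul hb1 hb2 (Real.exp_pos _).le (by positivity)
    _ = M * (1 / m ^ 2) := by rw [hM]; field_simp

/-- Continuity helper -/
theorem contOn_E (α β : ℝ) :
    ContinuousOn (fun s : ℝ => Real.exp (-(α * s - β / s) ^ 2)) (Ioi 0) := by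
  apply Real.continuous_exp.comp_continuousOn
  apply ContinuousOn.neg
  apply ContinuousOn.pow
  exact (continuousOn_const.mul continuousOn_id).sub
    (continuousOn_const.div continuousOn_id (fun s hs => ne_of_gt hs))

/-- exponent algebra: for `s > 0`, `(αs - β/s)² = α²s² + β²/s² - 2αβ`. -/
theorem exponent_eq {α β s : ℝ} (hs : s ≠ 0) :
    (α * s - β / s) ^ 2 = α ^ 2 * s ^ 2 + β ^ 2 / s ^ 2 - 2 * (α * β) := by
  field_simp
  ring

/-- `v * exp (-v) ≤ 1` for `0 ≤ v`. -/
theorem mul_exp_neg_le_one {v : ℝ} (hv : 0 ≤ v) : v * Real.exp (-v) ≤ 1 := by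
  rw [Real.exp_neg, mul_inv_le_iff₀ (Real.exp_pos v), one_mul]
  linarith [Real.add_one_le_exp v]

theorem integrableOn_E {α β : ℝ} (hα : 0 < α) (hβ : 0 < β) :
    IntegrableOn (fun s : ℝ => Real.exp (-(α * s - β / s) ^ 2)) (Ioi 0) := by
  have hg : IntegrableOn (fun s : ℝ => Real.exp (2 * (α * β)) *
      Real.exp (-(α ^ 2) * s ^ 2)) (Ioi 0) :=
    ((integrable_exp_neg_mul_sq (by positivity : (0:ℝ) < α ^ 2)).restrict).const_mul _
  refine hg.mono' ((contOn_E α β).aestronglyMeasurable measurableSet_Ioi) ?_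
  rw [ae_restrict_iff' measurableSet_Ioi]
  refine ae_of_all _ fun s hs => ?_
  rw [Real.norm_eq_abs, abs_of_pos (Real.exp_pos _), ← Real.exp_add]
  apply Real.exp_le_exp.2
  rw [exponent_eq (ne_of_gt hs)]
  have : 0 ≤ β ^ 2 / s ^ 2 := by positivity
  ring_nf
  nlinarith

theorem integrableOn_E2 {α β : ℝ} (hα : 0 < α) (hβ : 0 < β) :
    IntegrableOn (fun s : ℝ => β / s ^ 2 * Real.exp (-(α * s - β / s) ^ 2)) (Ioi 0) := by
  have hg : IntegrableOn (fun s : ℝ => (Real.exp (2 * (α * β)) / β) *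
      Real.exp (-(α ^ 2) * s ^ 2)) (Ioi 0) :=
    ((integrable_exp_neg_mul_sq (by positivity : (0:ℝ) < α ^ 2)).restrict).const_mul _
  have hcont : ContinuousOn (fun s : ℝ => β / s ^ 2 *
      Real.exp (-(α * s - β / s) ^ 2)) (Ioi 0) := by
    apply ContinuousOn.mul ?_ (contOn_E α β)
    exact continuousOn_const.div (continuousOn_pow 2) (fun s hs => pow_ne_zero 2 (ne_of_gt hs))
  refine hg.mono' (hcont.aestronglyMeasurable measurableSet_Ioi) ?_
  rw [ae_restrict_iff' measurableSet_Ioi]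
  refine ae_of_all _ fun s hs => ?_
  have hs0 : (0:ℝ) < s := hs
  rw [Real.norm_eq_abs, abs_of_pos (by positivity)]
  have key : Real.exp (-(α * s - β / s) ^ 2) =
      Real.exp (2 * (α * β)) * Real.exp (-(α^2) * s^2) * Real.exp (-(β^2) / s^2) := by
    rw [← Real.exp_add, ← Real.exp_add]
    congr 1
    rw [exponent_eq (ne_of_gt hs0)]
    ring
  rw [key]
  have hmain : β / s ^ 2 * Real.exp (-(β^2) / s^2) ≤ 1 / β := by
    have h1 : β ^ 2 / s ^ 2 * Real.exp (-(β ^ 2 / s ^ 2)) ≤ 1 :=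
      mul_exp_neg_le_one (by positivity)
    have h2 : β / s ^ 2 * Real.exp (-(β^2) / s^2) =
        (1 / β) * (β ^ 2 / s ^ 2 * Real.exp (-(β ^ 2 / s ^ 2))) := by
      rw [neg_div]
      field_simp
    rw [h2]
    calc (1 / β) * (β ^ 2 / s ^ 2 * Real.exp (-(β ^ 2 / s ^ 2))) ≤ (1 / β) * 1 :=
          mul_le_mul_of_nonneg_left h1 (by positivity)
      _ = 1 / β := mul_one _
  calc β / s ^ 2 * (Real.exp (2 * (α * β)) * Real.exp (-(α^2) * s^2) *
        Real.exp (-(β^2) / s^2))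
      = (β / s ^ 2 * Real.exp (-(β^2) / s^2)) * Real.exp (2 * (α * β)) *
        Real.exp (-(α^2) * s^2) := by ring
    _ ≤ (1 / β) * Real.exp (2 * (α * β)) * Real.exp (-(α^2) * s^2) := by
        apply mul_le_mul_of_nonneg_right ?_ (Real.exp_pos _).le
        exact mul_le_mul_of_nonneg_right hmain (Real.exp_pos _).le
    _ = Real.exp (2 * (α * β)) / β * Real.exp (-(α ^ 2) * s ^ 2) := by ring

theorem glasser {α β : ℝ} (hα : 0 < α) (hβ : 0 < β) :
    ∫ s in Ioi (0:ℝ), Real.exp (-(α * s - β / s) ^ 2) = Real.sqrt π / (2 * α) := by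
  set f : ℝ → ℝ := fun s => α * s - β / s with hf
  set f' : ℝ → ℝ := fun s => α + β / s ^ 2 with hf'
  have hderiv : ∀ s ∈ Ioi (0:ℝ), HasDerivWithinAt f (f' s) (Ioi 0) s := by
    intro s hs
    have hs0 : s ≠ 0 := ne_of_gt hs
    have : HasDerivAt f (α + β / s ^ 2) s := by
      have h1 : HasDerivAt (fun s : ℝ => α * s) α s := by
        simpa using (hasDerivAt_id s).const_mul α
      have h2 : HasDerivAt (fun s : ℝ => β / s) (β * -(s ^ 2)⁻¹) s := by
        simpa [div_eq_mul_inv] using (hasDerivAt_inv hs0).const_mul β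
      have := h1.sub h2
      exact this.congr_deriv (by ring)
    exact this.hasDerivWithinAt
  have hinj : Set.InjOn f (Ioi 0) := by
    apply StrictMonoOn.injOn
    intro s hs t ht hst
    have hs0 : (0:ℝ) < s := hs
    have ht0 : (0:ℝ) < t := ht
    simp only [hf]
    have h1 : α * s < α * t := by nlinarith
    have h2 : β / t < β / s := by
      apply div_lt_div_of_pos_left hβ hs0 hst
    linarith
  have himage : f '' (Ioi 0) = univ := by
    apply Set.eq_univ_of_forall
    intro v
    set D : ℝ := Real.sqrt (v ^ 2 + 4 * (α * β)) with hD
    have hD2 : D ^ 2 = v ^ 2 + 4 * (α * β) := Real.sq_sqrt (by positivity)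
    have hDpos : |v| < D := by
      rw [hD, ← Real.sqrt_sq_eq_abs]
      apply Real.sqrt_lt_sqrt (sq_nonneg v)
      nlinarith
    set s : ℝ := (v + D) / (2 * α) with hs
    have hspos : 0 < s := by
      rw [hs]
      apply div_pos ?_ (by positivity)
      have := neg_abs_le v
      linarith [hDpos]
    refine ⟨s, hspos, ?_⟩
    have hs0 : s ≠ 0 := ne_of_gt hspos
    show α * s - β / s = v
    have hquad : α * s ^ 2 - v * s - β = 0 := by
      rw [hs]
      field_simp
      nlinarith [hD2]
    field_simp
    nlinarith [hquad]
  -- first change of variables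
  have cov1 := MeasureTheory.integral_image_eq_integral_abs_deriv_smul
    measurableSet_Ioi hderiv hinj (fun v => Real.exp (-v ^ 2))
  rw [himage, Measure.restrict_univ] at cov1
  have hgauss : ∫ v : ℝ, Real.exp (-v ^ 2) = Real.sqrt π := by
    simpa using integral_gaussian 1
  rw [hgauss] at cov1
  -- simplify RHS of cov1
  have hrhs : ∫ s in Ioi (0:ℝ), |f' s| • Real.exp (-(f s) ^ 2) =
      ∫ s in Ioi (0:ℝ), (α * Real.exp (-(α * s - β / s) ^ 2)
        + β / s ^ 2 * Real.exp (-(α * s - β / s) ^ 2)) := by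
    apply setIntegral_congr_fun measurableSet_Ioi
    intro s hs
    have hs0 : (0:ℝ) < s := hs
    have hfpos : (0:ℝ) < α + β / s ^ 2 := by positivity
    simp only [smul_eq_mul, abs_of_pos hfpos, hf, hf']
    ring
  -- second change of variables: s ↦ β/(α s) maps Ioi 0 to itself
  have cov2 : ∫ s in Ioi (0:ℝ), Real.exp (-(α * s - β / s) ^ 2) =
      ∫ s in Ioi (0:ℝ), β / (α * s ^ 2) * Real.exp (-(α * s - β / s) ^ 2) := by
    set h : ℝ → ℝ := fun s => β / α * s⁻¹ with hh
    set h' : ℝ → ℝ := fun s => β / α * -(s ^ 2)⁻¹ with hh'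
    have hderiv2 : ∀ s ∈ Ioi (0:ℝ), HasDerivWithinAt h (h' s) (Ioi 0) s :=
      fun s hs => (((hasDerivAt_inv (ne_of_gt hs)).const_mul (β / α))).hasDerivWithinAt
    have hinj2 : Set.InjOn h (Ioi 0) := by
      intro s hs t ht hst
      have hs0 : (0:ℝ) < s := hs
      have ht0 : (0:ℝ) < t := ht
      simp only [hh] at hst
      have hba : β / α ≠ 0 := by positivity
      exact inv_injective (mul_left_cancel₀ hba hst)
    have himage2 : h '' (Ioi 0) = Ioi 0 := by
      ext u
      constructor
      · rintro ⟨s, hs, rfl⟩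
        have hs0 : (0:ℝ) < s := hs
        simp only [hh]
        have : 0 < β / α * s⁻¹ := by positivity
        exact this
      · intro hu
        have hu0 : (0:ℝ) < u := hu
        refine ⟨β / α * u⁻¹, Set.mem_Ioi.2 (by positivity), ?_⟩
        simp only [hh]
        have hα' : α ≠ 0 := ne_of_gt hα
        have hβ' : β ≠ 0 := ne_of_gt hβ
        have hu' : u ≠ 0 := ne_of_gt hu0
        field_simp
    have cov := MeasureTheory.integral_image_eq_integral_abs_deriv_smul
      measurableSet_Ioi hderiv2 hinj2 (fun u => Real.exp (-(α * u - β / u) ^ 2))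
    rw [himage2] at cov
    rw [cov]
    apply setIntegral_congr_fun measurableSet_Ioi
    intro s hs
    have hs0 : (0:ℝ) < s := hs
    have hα' : α ≠ 0 := ne_of_gt hα
    have hβ' : β ≠ 0 := ne_of_gt hβ
    have hs' : s ≠ 0 := ne_of_gt hs0
    have habs : |h' s| = β / (α * s ^ 2) := by
      have hval : h' s = -(β / (α * s ^ 2)) := by
        simp only [hh']
        field_simp
      rw [hval, abs_neg, abs_of_pos (by positivity)]
    have harg : α * (h s) - β / (h s) = -(α * s - β / s) := by
      simp only [hh]
      field_simp
      ring
    simp only [smul_eq_mul, habs, harg, neg_sq]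
  -- assemble
  set K := ∫ s in Ioi (0:ℝ), Real.exp (-(α * s - β / s) ^ 2) with hK
  have hI2 : ∫ s in Ioi (0:ℝ), β / s ^ 2 * Real.exp (-(α * s - β / s) ^ 2) = α * K := by
    have hstep : ∫ s in Ioi (0:ℝ), β / (α * s ^ 2) * Real.exp (-(α * s - β / s) ^ 2) =
        α⁻¹ * ∫ s in Ioi (0:ℝ), β / s ^ 2 * Real.exp (-(α * s - β / s) ^ 2) := by
      rw [← MeasureTheory.integral_const_mul]
      apply setIntegral_congr_fun measurableSet_Ioi
      intro s hs
      have hs0 : (0:ℝ) < s := hs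
      field_simp
    rw [hstep] at cov2
    have hα' : α ≠ 0 := ne_of_gt hα
    field_simp at cov2 ⊢
    linarith
  have hadd : Real.sqrt π = α * K + α * K := by
    rw [cov1, hrhs, MeasureTheory.integral_add ((integrableOn_E hα hβ).const_mul α)
      (integrableOn_E2 hα hβ), MeasureTheory.integral_const_mul, hI2, hK]
  have hα' : α ≠ 0 := ne_of_gt hα
  rw [hK] at *
  rw [eq_div_iff (by positivity)]
  linear_combination -hadd


theorem besselJ {x y : ℝ} (hx : 0 < x) (hy : 0 < y) :
    ∫ s in Ioi (0:ℝ), Real.exp (-(x * s ^ 2) - y / s ^ 2) =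
      Real.sqrt (π / x) / 2 * Real.exp (-2 * Real.sqrt (x * y)) := by
  set α := Real.sqrt x with hα
  set β := Real.sqrt y with hβ
  have hα0 : 0 < α := Real.sqrt_pos.2 hx
  have hβ0 : 0 < β := Real.sqrt_pos.2 hy
  have hα2 : α ^ 2 = x := Real.sq_sqrt hx.le
  have hβ2 : β ^ 2 = y := Real.sq_sqrt hy.le
  have hαβ : α * β = Real.sqrt (x * y) := (Real.sqrt_mul hx.le y).symm
  have hpt : ∀ s ∈ Ioi (0:ℝ), Real.exp (-(x * s ^ 2) - y / s ^ 2) =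
      Real.exp (-2 * Real.sqrt (x * y)) * Real.exp (-(α * s - β / s) ^ 2) := by
    intro s hs
    rw [← Real.exp_add]
    congr 1
    rw [exponent_eq (ne_of_gt (show (0:ℝ) < s from hs)), hα2, hβ2, hαβ]
    ring
  rw [setIntegral_congr_fun measurableSet_Ioi hpt, MeasureTheory.integral_const_mul,
    glasser hα0 hβ0]
  rw [Real.sqrt_div pi_pos.le x]
  ring


theorem bessel {x y : ℝ} (hx : 0 < x) (hy : 0 < y) :
    ∫ t in Ioi (0:ℝ), t ^ (-(1:ℝ)/2) * Real.exp (-(x * t) - y / t) =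
      Real.sqrt (π / x) * Real.exp (-2 * Real.sqrt (x * y)) := by
  have key := MeasureTheory.integral_comp_rpow_Ioi_of_pos
    (g := fun t : ℝ => t ^ (-(1:ℝ)/2) * Real.exp (-(x * t) - y / t)) (two_pos)
  rw [← key]
  have hpt : ∀ s ∈ Ioi (0:ℝ),
      (2 * s ^ ((2:ℝ) - 1)) • ((s ^ (2:ℝ)) ^ (-(1:ℝ)/2) *
        Real.exp (-(x * s ^ (2:ℝ)) - y / s ^ (2:ℝ))) =
      2 * Real.exp (-(x * s ^ 2) - y / s ^ 2) := by
    intro s hs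
    have hs0 : (0:ℝ) < s := hs
    have h1 : s ^ ((2:ℝ) - 1) = s := by norm_num
    have h2 : s ^ (2:ℝ) = s ^ 2 := by
      rw [← Real.rpow_natCast s 2]; norm_num
    have h3 : (s ^ 2 : ℝ) ^ (-(1:ℝ)/2) = s⁻¹ := by
      rw [← h2, ← Real.rpow_mul hs0.le]
      norm_num
      rw [Real.rpow_neg_one]
    rw [h1, h2, h3, smul_eq_mul]
    field_simp
  rw [setIntegral_congr_fun measurableSet_Ioi hpt, MeasureTheory.integral_const_mul,
    besselJ hx hy]
  ring

theorem bessel_integrableOn {x y : ℝ} (hx : 0 < x) (hy : 0 < y) :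
    IntegrableOn (fun t : ℝ => t ^ (-(1:ℝ)/2) * Real.exp (-(x * t) - y / t)) (Ioi 0) := by
  have hg : IntegrableOn (fun t : ℝ => (1 + 1 / y) * Real.exp (-x * t)) (Ioi 0) :=
    (exp_neg_integrableOn_Ioi 0 hx).const_mul _
  have hcont : ContinuousOn (fun t : ℝ => t ^ (-(1:ℝ)/2) *
      Real.exp (-(x * t) - y / t)) (Ioi 0) := by
    apply ContinuousOn.mul
    · exact continuousOn_id.rpow_const fun s hs => Or.inl (ne_of_gt hs)
    · apply Real.continuous_exp.comp_continuousOn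
      exact ((continuousOn_const.mul continuousOn_id).neg).sub
        (continuousOn_const.div continuousOn_id (fun s hs => ne_of_gt hs))
  refine hg.mono' (hcont.aestronglyMeasurable measurableSet_Ioi) ?_
  rw [ae_restrict_iff' measurableSet_Ioi]
  refine ae_of_all _ fun t ht => ?_
  have ht0 : (0:ℝ) < t := ht
  have hsplit : Real.exp (-(x * t) - y / t) = Real.exp (-(x * t)) * Real.exp (-(y / t)) := by
    rw [← Real.exp_add]; ring_nf
  have hb : t ^ (-(1:ℝ)/2) * Real.exp (-(y / t)) ≤ 1 + 1 / y := by
    rcases le_or_gt 1 t with h1 | h1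
    · have e1 : t ^ (-(1:ℝ)/2) ≤ 1 :=
        Real.rpow_le_one_of_one_le_of_nonpos h1 (by norm_num)
      have e2 : Real.exp (-(y / t)) ≤ 1 := by
        rw [Real.exp_le_one_iff]
        have : 0 ≤ y / t := by positivity
        linarith
      nlinarith [Real.exp_pos (-(y/t)), Real.rpow_nonneg ht0.le (-(1:ℝ)/2),
        one_div_pos.2 hy]
    · have hts : t ≤ Real.sqrt t := by
        nlinarith [Real.sq_sqrt ht0.le, Real.sqrt_nonneg t, Real.sqrt_le_one.2 h1.le]

      have e1 : t ^ (-(1:ℝ)/2) ≤ t⁻¹ := by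
        rw [neg_div, Real.rpow_neg ht0.le, ← Real.sqrt_eq_rpow]
        exact inv_anti₀ ht0 hts
      have e2 : t⁻¹ * Real.exp (-(y / t)) ≤ 1 / y := by
        have h3 : (y / t) * Real.exp (-(y / t)) ≤ 1 := mul_exp_neg_le_one (by positivity)
        have h4 : t⁻¹ * Real.exp (-(y / t)) = (1 / y) * ((y / t) * Real.exp (-(y / t))) := by
          field_simp
        rw [h4]
        calc (1 / y) * ((y / t) * Real.exp (-(y / t))) ≤ (1 / y) * 1 :=
              mul_le_mul_of_nonneg_left h3 (by positivity)
          _ = 1 / y := mul_one _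
      calc t ^ (-(1:ℝ)/2) * Real.exp (-(y / t)) ≤ t⁻¹ * Real.exp (-(y / t)) :=
            mul_le_mul_of_nonneg_right e1 (Real.exp_pos _).le
        _ ≤ 1 / y := e2
        _ ≤ 1 + 1 / y := by linarith
  rw [Real.norm_eq_abs, abs_of_nonneg (mul_nonneg (Real.rpow_nonneg ht0.le _)
    (Real.exp_pos _).le), hsplit, neg_mul]
  calc t ^ (-(1:ℝ)/2) * (Real.exp (-(x * t)) * Real.exp (-(y / t)))
      = (t ^ (-(1:ℝ)/2) * Real.exp (-(y / t))) * Real.exp (-(x * t)) := by ring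
    _ ≤ (1 + 1 / y) * Real.exp (-(x * t)) :=
        mul_le_mul_of_nonneg_right hb (Real.exp_pos _).le


-- new material
noncomputable def theta (t : ℝ) : ℝ := ∑' n : ℤ, Real.exp (-π * t * (n : ℝ) ^ 2)

noncomputable def Theta2 (t : ℝ) : ℝ≥0∞ :=
  ∑' p : ℤ × ℤ, ENNReal.ofReal (Real.exp (-π * t * ((p.1 : ℝ) ^ 2 + (p.2 : ℝ) ^ 2)))

noncomputable def Phi (a b : ℝ) : ℝ≥0∞ :=
  ∫⁻ t in Ioi (0:ℝ),
    ENNReal.ofReal (t ^ (-(1:ℝ)/2) * Real.exp (-(π * a * t) - π * b / t)) * Theta2 t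

theorem measurable_g (c d : ℝ) : Measurable fun t : ℝ =>
    ENNReal.ofReal (t ^ (-(1:ℝ)/2) * Real.exp (-(c * t) - d / t)) := by
  apply Measurable.ennreal_ofReal
  fun_prop

theorem Theta2_sq {t : ℝ} (ht : 0 < t) :
    Theta2 t = ENNReal.ofReal (theta t) ^ 2 := by
  have h1 : Theta2 t = ∑' p : ℤ × ℤ,
      ENNReal.ofReal (Real.exp (-π * t * (p.1 : ℝ) ^ 2)) *
      ENNReal.ofReal (Real.exp (-π * t * (p.2 : ℝ) ^ 2)) := by
    apply tsum_congr
    intro p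
    rw [← ENNReal.ofReal_mul (Real.exp_pos _).le, ← Real.exp_add]
    congr 2
    ring
  rw [h1, ENNReal.tsum_prod']
  have h2 : ∀ m : ℤ, ∑' k : ℤ, ENNReal.ofReal (Real.exp (-π * t * (m : ℝ) ^ 2)) *
      ENNReal.ofReal (Real.exp (-π * t * (k : ℝ) ^ 2)) =
      ENNReal.ofReal (Real.exp (-π * t * (m : ℝ) ^ 2)) * ENNReal.ofReal (theta t) := by
    intro m
    rw [ENNReal.tsum_mul_left]
    congr 1
    rw [theta, ENNReal.ofReal_tsum_of_nonneg (fun n => (Real.exp_pos _).le)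
      (summable_theta ht)]
  rw [tsum_congr h2, ENNReal.tsum_mul_right]
  have h3 : (∑' i : ℤ, ENNReal.ofReal (Real.exp (-π * t * (i : ℝ) ^ 2))) =
      ENNReal.ofReal (theta t) := by
    rw [theta]
    exact (ENNReal.ofReal_tsum_of_nonneg (fun n => (Real.exp_pos _).le)
      (summable_theta ht)).symm
  rw [h3]
  ring

/-- Lemma A: single-term Bessel identity in `ℝ≥0∞`. -/
theorem termA {a b : ℝ} (ha : 0 < a) (hb : 0 < b) (n : ℕ) :
    ENNReal.ofReal ((r2 n : ℝ) / Real.sqrt ((n : ℝ) + a) *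
        Real.exp (-2 * π * Real.sqrt (((n : ℝ) + a) * b))) =
      (r2 n : ℝ≥0∞) * ∫⁻ t in Ioi (0:ℝ), ENNReal.ofReal
        (t ^ (-(1:ℝ)/2) * Real.exp (-(π * ((n : ℝ) + a) * t) - π * b / t)) := by
  have hna : (0:ℝ) < (n : ℝ) + a := by positivity
  have hx : (0:ℝ) < π * ((n : ℝ) + a) := by positivity
  have hy : (0:ℝ) < π * b := by positivity
  have hint := bessel hx hy
  have e1 : Real.sqrt (π / (π * ((n : ℝ) + a))) = (Real.sqrt ((n : ℝ) + a))⁻¹ := by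
    have : π / (π * ((n : ℝ) + a)) = ((n : ℝ) + a)⁻¹ := by
      field_simp
    rw [this, Real.sqrt_inv]
  have e2 : Real.sqrt (π * ((n : ℝ) + a) * (π * b)) = π * Real.sqrt (((n : ℝ) + a) * b) := by
    have h : π * ((n : ℝ) + a) * (π * b) = π ^ 2 * (((n : ℝ) + a) * b) := by ring
    rw [h, Real.sqrt_mul (sq_nonneg π), Real.sqrt_sq pi_pos.le]
  rw [e1, e2] at hint
  have e3 : (r2 n : ℝ) / Real.sqrt ((n : ℝ) + a) *
      Real.exp (-2 * π * Real.sqrt (((n : ℝ) + a) * b)) =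
      (r2 n : ℝ) * ((Real.sqrt ((n : ℝ) + a))⁻¹ *
        Real.exp (-2 * (π * Real.sqrt (((n : ℝ) + a) * b)))) := by
    rw [div_eq_mul_inv]
    ring_nf
  rw [e3, ENNReal.ofReal_mul (by positivity), ENNReal.ofReal_natCast]
  congr 1
  rw [← hint, MeasureTheory.ofReal_integral_eq_lintegral_ofReal
    (bessel_integrableOn hx hy) ?_]
  rw [Filter.EventuallyLE, ae_restrict_iff' measurableSet_Ioi]
  refine ae_of_all _ fun t ht => ?_
  have ht0 : (0:ℝ) < t := ht
  exact mul_nonneg (Real.rpow_nonneg ht0.le _) (Real.exp_pos _).le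

/-- Lemma B: Tonelli. -/
theorem tonelli {a b : ℝ} (ha : 0 < a) (hb : 0 < b) :
    ∑' n : ℕ, ENNReal.ofReal ((r2 n : ℝ) / Real.sqrt ((n : ℝ) + a) *
        Real.exp (-2 * π * Real.sqrt (((n : ℝ) + a) * b))) = Phi a b := by
  set fn : ℤ × ℤ → ℕ := fun p => (p.1 ^ 2 + p.2 ^ 2).toNat with hfn
  set L : ℕ → ℝ≥0∞ := fun n => ∫⁻ t in Ioi (0:ℝ), ENNReal.ofReal
      (t ^ (-(1:ℝ)/2) * Real.exp (-(π * ((n : ℝ) + a) * t) - π * b / t)) with hL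
  have step1 : ∀ n : ℕ, ENNReal.ofReal ((r2 n : ℝ) / Real.sqrt ((n : ℝ) + a) *
      Real.exp (-2 * π * Real.sqrt (((n : ℝ) + a) * b))) =
      ∑' _ : {p : ℤ × ℤ // fn p = n}, L n := by
    intro n
    haveI : Finite {p : ℤ × ℤ | p.1 ^ 2 + p.2 ^ 2 = (n : ℤ)} := (fiber_finite n).to_subtype
    haveI : Finite {p : ℤ × ℤ // fn p = n} := by
      refine Finite.of_equiv {p : ℤ × ℤ | p.1 ^ 2 + p.2 ^ 2 = (n : ℤ)}
        (Equiv.subtypeEquiv (Equiv.refl (ℤ × ℤ)) fun p => ?_)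
      simp only [Equiv.refl_apply, hfn, Set.mem_setOf_eq]
      constructor
      · intro h; rw [h, Int.toNat_natCast]
      · intro h; rw [← h, Int.toNat_of_nonneg (by positivity)]
    haveI : Fintype {p : ℤ × ℤ // fn p = n} := Fintype.ofFinite _
    rw [tsum_eq_sum (s := Finset.univ) (by simp), Finset.sum_const, nsmul_eq_mul]
    rw [termA ha hb n, ← card_fiber n, Nat.card_eq_fintype_card, Finset.card_univ]
  rw [tsum_congr step1]
  -- reindex over ℤ × ℤ via the fiber equivalence
  have step2 : ∑' n : ℕ, ∑' _ : {p : ℤ × ℤ // fn p = n}, L n =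
      ∑' p : ℤ × ℤ, L (fn p) := by
    rw [← ENNReal.tsum_sigma (f := fun n (_ : {p : ℤ × ℤ // fn p = n}) => L n)]
    rw [← (Equiv.sigmaFiberEquiv fn).tsum_eq (fun p => L (fn p))]
    apply tsum_congr
    rintro ⟨n, p, hp⟩
    simp only [Equiv.sigmaFiberEquiv, Equiv.coe_fn_mk, hp]
  rw [step2]
  -- Tonelli
  have step3 : ∑' p : ℤ × ℤ, L (fn p) = ∫⁻ t in Ioi (0:ℝ),
      ∑' p : ℤ × ℤ, ENNReal.ofReal
      (t ^ (-(1:ℝ)/2) * Real.exp (-(π * ((fn p : ℝ) + a) * t) - π * b / t)) := by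
    rw [MeasureTheory.lintegral_tsum]
    intro p
    exact (measurable_g (π * ((fn p : ℝ) + a)) (π * b)).aemeasurable
  rw [step3, Phi]
  apply setLIntegral_congr_fun measurableSet_Ioi
  intro t ht
  have ht0 : (0:ℝ) < t := ht
  beta_reduce
  rw [Theta2, ← ENNReal.tsum_mul_left]
  apply tsum_congr
  intro p
  have hcast : ((fn p : ℕ) : ℝ) = (p.1 : ℝ) ^ 2 + (p.2 : ℝ) ^ 2 := by
    have h0 : (0:ℤ) ≤ p.1 ^ 2 + p.2 ^ 2 := by positivity
    have h1 : ((p.1 ^ 2 + p.2 ^ 2).toNat : ℤ) = p.1 ^ 2 + p.2 ^ 2 := Int.toNat_of_nonneg h0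
    have h2 : ((p.1 ^ 2 + p.2 ^ 2).toNat : ℝ) = ((p.1 ^ 2 + p.2 ^ 2 : ℤ) : ℝ) := by
      exact_mod_cast h1
    rw [hfn]
    simp only []
    rw [h2]
    push_cast
    ring
  rw [← ENNReal.ofReal_mul (mul_nonneg (Real.rpow_nonneg ht0.le _) (Real.exp_pos _).le)]
  congr 1
  conv_rhs => rw [mul_assoc, ← Real.exp_add]
  rw [hcast]
  congr 1
  ring


theorem phi_symm {a b : ℝ} (ha : 0 < a) (hb : 0 < b) : Phi a b = Phi b a := by
  have hderiv : ∀ t ∈ Ioi (0:ℝ), HasDerivWithinAt (fun t : ℝ => t⁻¹) (-(t ^ 2)⁻¹) (Ioi 0) t :=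
    fun t ht => (hasDerivAt_inv (ne_of_gt (show (0:ℝ) < t from ht))).hasDerivWithinAt
  have hinj : Set.InjOn (fun t : ℝ => t⁻¹) (Ioi 0) := fun s _ t _ h => inv_injective h
  have himage : (fun t : ℝ => t⁻¹) '' (Ioi 0) = Ioi 0 := by
    ext u
    constructor
    · rintro ⟨t, ht, rfl⟩
      exact Set.mem_Ioi.2 (inv_pos.2 ht)
    · intro hu
      have hu0 : (0:ℝ) < u := hu
      exact ⟨u⁻¹, Set.mem_Ioi.2 (by positivity), inv_inv u⟩
  have cov := lintegral_image_eq measurableSet_Ioi hderiv hinj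
    (fun u => ENNReal.ofReal (u ^ (-(1:ℝ)/2) * Real.exp (-(π * a * u) - π * b / u)) * Theta2 u)
  rw [himage] at cov
  rw [Phi, cov, Phi]
  apply setLIntegral_congr_fun measurableSet_Ioi
  intro t ht
  have ht0 : (0:ℝ) < t := ht
  have ht' : t ≠ 0 := ne_of_gt ht0
  have hs0 : (0:ℝ) < Real.sqrt t := Real.sqrt_pos.2 ht0
  have hss : Real.sqrt t * Real.sqrt t = t := Real.mul_self_sqrt ht0.le
  -- the inverse-point values
  have habs : |(-(t ^ 2)⁻¹)| = (t ^ 2)⁻¹ := by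
    rw [abs_neg, abs_of_pos (by positivity)]
  have hrpow_inv : (t⁻¹) ^ (-(1:ℝ)/2) = Real.sqrt t := by
    rw [neg_div, Real.inv_rpow ht0.le, ← Real.rpow_neg ht0.le, neg_neg, ← Real.sqrt_eq_rpow]
  have hrpow : t ^ (-(1:ℝ)/2) = (Real.sqrt t)⁻¹ := by
    rw [neg_div, Real.rpow_neg ht0.le, ← Real.sqrt_eq_rpow]
  have hexp : -(π * a * t⁻¹) - π * b / t⁻¹ = -(π * b * t) - π * a / t := by
    field_simp
    ring
  have hTheta : Theta2 t⁻¹ = ENNReal.ofReal (Real.sqrt t * theta t) ^ 2 := by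
    rw [Theta2_sq (inv_pos.2 ht0), theta, theta, theta_inv ht0]
  beta_reduce
  rw [hTheta, Theta2_sq ht0, habs, hrpow_inv, hexp]
  -- now a pure `ofReal` computation
  have hth : 0 ≤ theta t := theta_nonneg t
  rw [← ENNReal.ofReal_pow (show (0:ℝ) ≤ Real.sqrt t * theta t from by positivity),
    ← ENNReal.ofReal_pow hth,
    ← ENNReal.ofReal_mul (show (0:ℝ) ≤ Real.sqrt t * Real.exp (-(π * b * t) - π * a / t)
      from by positivity),
    ← ENNReal.ofReal_mul (show (0:ℝ) ≤ (t ^ 2)⁻¹ from by positivity),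
    ← ENNReal.ofReal_mul (mul_nonneg (Real.rpow_nonneg ht0.le _) (Real.exp_pos _).le)]
  congr 1
  rw [hrpow]
  have hexpand : (Real.sqrt t * theta t) ^ 2 = t * theta t ^ 2 := by
    rw [mul_pow, Real.sq_sqrt ht0.le]
  rw [hexpand]
  field_simp
  linear_combination theta t ^ 2 * hss


end RamanujanAux

open RamanujanAux in
/-- Ramanujan's identity: for `a, b > 0`, the two series
`∑ r₂(n)/√(n+a) · e^{-2π√((n+a)b)}` and `∑ r₂(n)/√(n+b) · e^{-2π√((n+b)a)}`
converge and are equal. -/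
theorem ramanujan_two_squares_identity (a b : ℝ) (ha : 0 < a) (hb : 0 < b) :
    ∃ L : ℝ,
      HasSum (fun n : ℕ => (r2 n : ℝ) / Real.sqrt ((n : ℝ) + a) *
        Real.exp (-2 * Real.pi * Real.sqrt (((n : ℝ) + a) * b))) L ∧
      HasSum (fun n : ℕ => (r2 n : ℝ) / Real.sqrt ((n : ℝ) + b) *
        Real.exp (-2 * Real.pi * Real.sqrt (((n : ℝ) + b) * a))) L := by
  set f : ℕ → ℝ := fun n => (r2 n : ℝ) / Real.sqrt ((n : ℝ) + a) *
    Real.exp (-2 * π * Real.sqrt (((n : ℝ) + a) * b)) with hf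
  set g : ℕ → ℝ := fun n => (r2 n : ℝ) / Real.sqrt ((n : ℝ) + b) *
    Real.exp (-2 * π * Real.sqrt (((n : ℝ) + b) * a)) with hg
  have hfs : Summable f := summable_main a b ha hb
  have hgs : Summable g := summable_main b a hb ha
  have hfnn : ∀ n, 0 ≤ f n := fun n => by
    apply mul_nonneg (div_nonneg (Nat.cast_nonneg _) (Real.sqrt_nonneg _)) (Real.exp_pos _).le
  have hgnn : ∀ n, 0 ≤ g n := fun n => by
    apply mul_nonneg (div_nonneg (Nat.cast_nonneg _) (Real.sqrt_nonneg _)) (Real.exp_pos _).le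
  have key : (∑' n, f n) = ∑' n, g n := by
    have h1 : ENNReal.ofReal (∑' n, f n) = Phi a b := by
      rw [ENNReal.ofReal_tsum_of_nonneg hfnn hfs]
      exact tonelli ha hb
    have h2 : ENNReal.ofReal (∑' n, g n) = Phi b a := by
      rw [ENNReal.ofReal_tsum_of_nonneg hgnn hgs]
      exact tonelli hb ha
    have h3 : ENNReal.ofReal (∑' n, f n) = ENNReal.ofReal (∑' n, g n) := by
      rw [h1, h2, phi_symm ha hb]
    exact (ENNReal.ofReal_eq_ofReal_iff (tsum_nonneg hfnn) (tsum_nonneg hgnn)).1 h3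
  exact ⟨∑' n, f n, hfs.hasSum, key ▸ hgs.hasSum⟩
end

section
/- (Ramanujan) For every positive integer n, τ(n) is odd if and only if n is an odd perfect square. -/
namespace RamanujanAux
open Polynomial Finset

abbrev R2 := Polynomial (ZMod 2)

noncomputable def gb (q : R2) : ℕ → ℕ → R2
  | _, 0 => 1
  | 0, _+1 => 0
  | n+1, m+1 => gb q n (m+1) + q^(n-m) * gb q n m
  termination_by n m => n + m

lemma gb_zero (q : R2) (n : ℕ) : gb q n 0 = 1 := by cases n <;> simp [gb]

lemma gb_pascalA (q : R2) (n m : ℕ) :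
    gb q (n+1) (m+1) = gb q n (m+1) + q^(n-m) * gb q n m := by simp [gb]

lemma gb_of_lt (q : R2) : ∀ n m, n < m → gb q n m = 0 := by
  intro n
  induction n with
  | zero =>
    intro m hm
    match m, hm with
    | m+1, _ => simp [gb]
  | succ n ih =>
    intro m hm
    match m, hm with
    | m+1, hm =>
      rw [gb_pascalA, ih (m+1) (by omega), ih m (by omega), mul_zero, add_zero]

lemma gb_diag (q : R2) : ∀ n, gb q n n = 1 := by
  intro n
  induction n with
  | zero => simp [gb]
  | succ n ih =>
    rw [gb_pascalA, gb_of_lt q n (n+1) (by omega), ih, Nat.sub_self, pow_zero, zero_add, one_mul]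

/-- product of `1 + q^i` over `i ∈ [a, b)` -/
noncomputable def Pp (q : R2) (a b : ℕ) : R2 := ∏ i ∈ Ico a b, (1 + q^i)

lemma Pp_empty (q : R2) {a b : ℕ} (h : b ≤ a) : Pp q a b = 1 := by
  unfold Pp
  rw [Finset.Ico_eq_empty (by omega), Finset.prod_empty]

lemma Pp_succ_top (q : R2) {a b : ℕ} (h : a ≤ b) : Pp q a (b+1) = Pp q a b * (1 + q^b) :=
  Finset.prod_Ico_succ_top h _

lemma Pp_succ_bot (q : R2) {a b : ℕ} (h : a < b) : Pp q a b = (1 + q^a) * Pp q (a+1) b :=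
  Finset.prod_eq_prod_Ico_succ_bot h _

lemma two_eq_zero : (2 : R2) = 0 := by
  simpa using CharP.cast_eq_zero R2 2

lemma gbProd (q : R2) : ∀ n m, m ≤ n → gb q n m * Pp q 1 (m+1) = Pp q (n-m+1) (n+1) := by
  intro n
  induction n with
  | zero =>
    intro m hm
    interval_cases m
    simp [gb_zero, Pp_empty]
  | succ n ih =>
    intro m hm
    match m with
    | 0 =>
      rw [gb_zero, one_mul, Pp_empty q (le_refl 1), Pp_empty q (by omega)]
    | m+1 =>
      have hmn : m ≤ n := by omega
      rw [gb_pascalA]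
      rcases Nat.lt_or_ge m n with hlt | hge
      · -- m + 1 ≤ n
        have h1 : gb q n (m+1) * Pp q 1 (m+2) = Pp q (n-(m+1)+1) (n+1) := ih (m+1) hlt
        have hs : n - (m+1) + 1 = n - m := by omega
        rw [hs] at h1
        have h2 : gb q n m * Pp q 1 (m+1) = Pp q (n-m+1) (n+1) := ih m hmn
        have hPp : Pp q 1 (m+2) = Pp q 1 (m+1) * (1 + q^(m+1)) := Pp_succ_top q (by omega)
        have hbot : Pp q (n-m) (n+1) = (1 + q^(n-m)) * Pp q (n-m+1) (n+1) :=
          Pp_succ_bot q (by omega)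
        have htop : Pp q (n+1-(m+1)+1) (n+2) = Pp q (n-m+1) (n+1) * (1 + q^(n+1)) := by
          have : n+1-(m+1)+1 = n-m+1 := by omega
          rw [this]
          exact Pp_succ_top q (by omega)
        rw [htop, add_mul, h1, hbot, hPp]
        have hq : q^(n-m) * q^(m+1) = q^(n+1) := by
          rw [← pow_add]
          congr 1
          omega
        calc (1 + q^(n-m)) * Pp q (n-m+1) (n+1) + q^(n-m) * gb q n m * (Pp q 1 (m+1) * (1 + q^(m+1)))
            = (1 + q^(n-m)) * Pp q (n-m+1) (n+1)
              + q^(n-m) * (1 + q^(m+1)) * (gb q n m * Pp q 1 (m+1)) := by ring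
          _ = (1 + q^(n-m)) * Pp q (n-m+1) (n+1)
              + q^(n-m) * (1 + q^(m+1)) * Pp q (n-m+1) (n+1) := by rw [h2]
          _ = Pp q (n-m+1) (n+1) * (1 + q^(n+1))
              + (2 * q^(n-m)) * Pp q (n-m+1) (n+1) := by rw [← hq]; ring
          _ = Pp q (n-m+1) (n+1) * (1 + q^(n+1)) := by
              rw [two_eq_zero]; ring
      · -- m = n
        have hmn' : m = n := by omega
        subst hmn'
        rw [gb_of_lt q m (m+1) (by omega), gb_diag, Nat.sub_self, pow_zero,
          show m+1-(m+1)+1 = 1 from by omega]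
        norm_num

lemma Pp_ne_zero {q : R2} (hq : ∀ i, 0 < i → (1 : R2) + q^i ≠ 0) {a b : ℕ} (ha : 0 < a) :
    Pp q a b ≠ 0 := by
  unfold Pp
  rw [Finset.prod_ne_zero_iff]
  intro i hi
  exact hq i (by simp [Finset.mem_Ico] at hi; omega)

lemma gb_pascalB {q : R2} (hq : ∀ i, 0 < i → (1 : R2) + q^i ≠ 0) (n m : ℕ) :
    gb q (n+1) (m+1) = gb q n m + q^(m+1) * gb q n (m+1) := by
  rcases Nat.lt_or_ge n m with hlt | hge
  · rw [gb_of_lt q (n+1) (m+1) (by omega), gb_of_lt q n m hlt, gb_of_lt q n (m+1) (by omega)]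
    ring
  rcases Nat.lt_or_ge m n with hlt | hge'
  · -- m < n
    apply mul_right_cancel₀ (Pp_ne_zero hq (b := m+2) Nat.one_pos)
    have h1 : gb q (n+1) (m+1) * Pp q 1 (m+2) = Pp q (n-m+1) (n+2) := by
      have := gbProd q (n+1) (m+1) (by omega)
      rwa [show n+1-(m+1)+1 = n-m+1 from by omega] at this
    have h2 : gb q n m * Pp q 1 (m+1) = Pp q (n-m+1) (n+1) := gbProd q n m (by omega)
    have h3 : gb q n (m+1) * Pp q 1 (m+2) = Pp q (n-m) (n+1) := by
      have := gbProd q n (m+1) (by omega)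
      rwa [show n-(m+1)+1 = n-m from by omega] at this
    rw [h1, add_mul, mul_assoc (q^(m+1)), h3,
      Pp_succ_top q (show 1 ≤ m+1 from by omega), ← mul_assoc, h2,
      Pp_succ_bot q (show n-m < n+1 from by omega),
      Pp_succ_top q (show n-m+1 ≤ n+1 from by omega)]
    symm
    have hq1 : q^(m+1) * q^(n-m) = q^(n+1) := by
      rw [← pow_add]; congr 1; omega
    calc Pp q (n-m+1) (n+1) * (1 + q^(m+1)) + q^(m+1) * ((1 + q^(n-m)) * Pp q (n-m+1) (n+1))
        = Pp q (n-m+1) (n+1) * (1 + q^(n+1)) + (2*q^(m+1)) * Pp q (n-m+1) (n+1) := by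
          rw [← hq1]; ring
      _ = Pp q (n-m+1) (n+1) * (1 + q^(n+1)) := by rw [two_eq_zero]; ring
  · -- m = n
    have : m = n := by omega
    subst this
    rw [gb_diag, gb_diag, gb_of_lt q m (m+1) (by omega)]
    ring

lemma sum_pascalA (q : R2) (c : ℕ → R2) (N K : ℕ) (h : N ≤ K) :
    ∑ m ∈ range (K+2), c m * gb q (N+1) m
      = ∑ m ∈ range (K+1), c m * gb q N m
        + ∑ m ∈ range (K+1), c (m+1) * (q^(N-m) * gb q N m) := by
  rw [Finset.sum_range_succ' (fun m => c m * gb q (N+1) m) (K+1)]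
  have e1 : ∀ m ∈ range (K+1), c (m+1) * gb q (N+1) (m+1)
      = c (m+1) * gb q N (m+1) + c (m+1) * (q^(N-m) * gb q N m) := by
    intro m _; rw [gb_pascalA]; ring
  rw [Finset.sum_congr rfl e1, Finset.sum_add_distrib, gb_zero]
  have e2 : ∑ m ∈ range (K+1), c m * gb q N m
      = ∑ m ∈ range (K+1), c (m+1) * gb q N (m+1) + c 0 * gb q N 0 := by
    have h' := Finset.sum_range_succ' (fun m => c m * gb q N m) (K+1)
    rw [Finset.sum_range_succ (fun m => c m * gb q N m) (K+1),
      gb_of_lt q N (K+1) (by omega), mul_zero, add_zero] at h'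
    exact h'
  rw [e2, gb_zero]
  ring

lemma sum_pascalB {q : R2} (hq : ∀ i, 0 < i → (1 : R2) + q^i ≠ 0) (c : ℕ → R2) (N K : ℕ)
    (h : N ≤ K) :
    ∑ m ∈ range (K+2), c m * gb q (N+1) m
      = ∑ m ∈ range (K+1), c (m+1) * gb q N m
        + ∑ m ∈ range (K+1), c m * (q^m * gb q N m) := by
  rw [Finset.sum_range_succ' (fun m => c m * gb q (N+1) m) (K+1)]
  have e1 : ∀ m ∈ range (K+1), c (m+1) * gb q (N+1) (m+1)
      = c (m+1) * gb q N m + c (m+1) * (q^(m+1) * gb q N (m+1)) := by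
    intro m _; rw [gb_pascalB hq]; ring
  rw [Finset.sum_congr rfl e1, Finset.sum_add_distrib, gb_zero]
  have e2 : ∑ m ∈ range (K+1), c m * (q^m * gb q N m)
      = ∑ m ∈ range (K+1), c (m+1) * (q^(m+1) * gb q N (m+1)) + c 0 * (q^0 * gb q N 0) := by
    have h' := Finset.sum_range_succ' (fun m => c m * (q^m * gb q N m)) (K+1)
    rw [Finset.sum_range_succ (fun m => c m * (q^m * gb q N m)) (K+1),
      gb_of_lt q N (K+1) (by omega), mul_zero, mul_zero, add_zero] at h'
    exact h'
  rw [e2, gb_zero, pow_zero]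
  ring
noncomputable def qq : R2 := X^4

lemma qq_pow (a : ℕ) : qq^a = X^(4*a) := by rw [qq, ← pow_mul]

lemma hqq : ∀ i, 0 < i → (1 : R2) + qq^i ≠ 0 := by
  intro i hi h
  have h0 := congrArg (fun p : R2 => p.coeff 0) h
  simp only [qq_pow, Polynomial.coeff_add, Polynomial.coeff_one, Polynomial.coeff_X_pow,
    Polynomial.coeff_zero] at h0
  rw [if_pos trivial, if_neg (by omega), add_zero] at h0
  exact one_ne_zero h0

/-- exponent `2(m-n)² + m` -/
def tE (n m : ℕ) : ℕ := (2*((m:ℤ) - n)^2 + m).toNat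

lemma tE_cast (n m : ℕ) : ((tE n m : ℕ) : ℤ) = 2*((m:ℤ)-n)^2 + m :=
  Int.toNat_of_nonneg (by positivity)

lemma tE_1 (n m : ℕ) : tE (n+1) (m+1) = tE n m + 1 := by
  have := tE_cast (n+1) (m+1); have h2 := tE_cast n m
  have : ((tE (n+1) (m+1) : ℕ) : ℤ) = ((tE n m + 1 : ℕ) : ℤ) := by
    push_cast
    rw [tE_cast, tE_cast]
    push_cast
    ring
  exact_mod_cast this

lemma tE_2 (n m : ℕ) : tE (n+1) m + 4*m = tE n m + (4*n+2) := by
  have : ((tE (n+1) m + 4*m : ℕ) : ℤ) = ((tE n m + (4*n+2) : ℕ) : ℤ) := by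
    push_cast
    rw [tE_cast, tE_cast]
    push_cast
    ring
  exact_mod_cast this

lemma tE_3 (n m : ℕ) (h : m ≤ 2*n) : tE (n+1) (m+2) + 4*(2*n-m) = tE n m + (4*n+4) := by
  have : ((tE (n+1) (m+2) + 4*(2*n-m) : ℕ) : ℤ) = ((tE n m + (4*n+4) : ℕ) : ℤ) := by
    push_cast [h]
    rw [tE_cast, tE_cast]
    push_cast
    ring
  exact_mod_cast this

noncomputable def Ssum (n : ℕ) : R2 := ∑ m ∈ range (2*n+1), X^(tE n m) * gb qq (2*n) m

lemma Ssum_succ (n : ℕ) :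
    Ssum (n+1) = (X + X^(4*n+2) + X^(4*n+4) + X^(8*n+5)) * Ssum n := by
  have step1 := sum_pascalA qq (fun m => X^(tE (n+1) m)) (2*n+1) (2*n+1) (le_refl _)
  have step2 := sum_pascalB hqq (fun m => X^(tE (n+1) m)) (2*n) (2*n) (le_refl _)
  have step3 := sum_pascalB hqq (fun m => X^(tE (n+1) (m+1)) * qq^(2*n+1-m)) (2*n) (2*n)
    (le_refl _)
  have e0 : Ssum (n+1) = ∑ m ∈ range (2*n+1+2), X^(tE (n+1) m) * gb qq (2*n+1+1) m := by
    unfold Ssum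
    rw [show 2*(n+1)+1 = 2*n+1+2 from by ring, show 2*(n+1) = 2*n+1+1 from by ring]
  rw [e0, step1]
  -- rewrite second sum into the shape of step3's LHS
  have e1 : ∑ m ∈ range (2*n+1+1), X^(tE (n+1) (m+1)) * (qq^(2*n+1-m) * gb qq (2*n+1) m)
      = ∑ m ∈ range (2*n+1+1), (X^(tE (n+1) (m+1)) * qq^(2*n+1-m)) * gb qq (2*n+1) m := by
    apply Finset.sum_congr rfl; intro m _; ring
  have e2 : (2*n+1+1) = (2*n+2) := by ring
  rw [e1]
  rw [show (2*n+1+1) = (2*n+2) from by ring] at step2 step3 ⊢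
  rw [show (2*n+1) = (2*n+1) from rfl]
  -- apply step2 and step3
  rw [step2, step3]
  -- now four sums over range (2*n+1); rewrite each termwise
  have hT1 : ∑ m ∈ range (2*n+1), X^(tE (n+1) (m+1)) * gb qq (2*n) m
      = ∑ m ∈ range (2*n+1), X^(tE n m + 1) * gb qq (2*n) m := by
    apply Finset.sum_congr rfl; intro m _
    rw [tE_1]
  have hT2 : ∑ m ∈ range (2*n+1), X^(tE (n+1) m) * (qq^m * gb qq (2*n) m)
      = ∑ m ∈ range (2*n+1), X^(tE n m + (4*n+2)) * gb qq (2*n) m := by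
    apply Finset.sum_congr rfl; intro m _
    rw [qq_pow, ← mul_assoc, ← pow_add, tE_2]
  have hT3 : ∑ m ∈ range (2*n+1), X^(tE (n+1) (m+1+1)) * qq^(2*n+1-(m+1)) * gb qq (2*n) m
      = ∑ m ∈ range (2*n+1), X^(tE n m + (4*n+4)) * gb qq (2*n) m := by
    apply Finset.sum_congr rfl; intro m hm
    rw [Finset.mem_range] at hm
    rw [show 2*n+1-(m+1) = 2*n-m from by omega, qq_pow, ← pow_add,
      tE_3 n m (by omega)]
  have hT4 : ∑ m ∈ range (2*n+1), X^(tE (n+1) (m+1)) * qq^(2*n+1-m) * (qq^m * gb qq (2*n) m)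
      = ∑ m ∈ range (2*n+1), X^(tE n m + (8*n+5)) * gb qq (2*n) m := by
    apply Finset.sum_congr rfl; intro m hm
    rw [Finset.mem_range] at hm
    have : qq^(2*n+1-m) * qq^m = qq^(2*n+1) := by
      rw [← pow_add]; congr 1; omega
    calc X^(tE (n+1) (m+1)) * qq^(2*n+1-m) * (qq^m * gb qq (2*n) m)
        = X^(tE (n+1) (m+1)) * (qq^(2*n+1-m) * qq^m) * gb qq (2*n) m := by ring
      _ = X^(tE n m + (8*n+5)) * gb qq (2*n) m := by
          rw [this, qq_pow, tE_1, ← pow_add]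
          congr 2
          ring
  rw [hT1, hT2, hT3, hT4]
  -- expand the right-hand side
  unfold Ssum
  rw [Finset.mul_sum]
  have hRHS : ∀ m ∈ range (2*n+1),
      (X + X^(4*n+2) + X^(4*n+4) + X^(8*n+5)) * (X^(tE n m) * gb qq (2*n) m)
      = X^(tE n m + 1) * gb qq (2*n) m + X^(tE n m + (4*n+2)) * gb qq (2*n) m
        + X^(tE n m + (4*n+4)) * gb qq (2*n) m + X^(tE n m + (8*n+5)) * gb qq (2*n) m := by
    intro m _
    rw [pow_add, pow_add, pow_add, pow_add, pow_one]
    ring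
  rw [Finset.sum_congr rfl hRHS]
  rw [Finset.sum_add_distrib, Finset.sum_add_distrib, Finset.sum_add_distrib]
  ring

theorem phi : ∀ n : ℕ, X^n * ∏ j ∈ Icc 1 n, ((1 + X^(4*j-1)) * (1 + X^(4*j-3))) = Ssum n := by
  intro n
  induction n with
  | zero =>
    show (1:R2) * _ = _
    rw [show Icc 1 0 = (∅ : Finset ℕ) from rfl, Finset.prod_empty, mul_one]
    unfold Ssum
    rw [show 2*0+1 = 1 from rfl]
    rw [Finset.sum_range_one]
    have : tE 0 0 = 0 := by unfold tE; norm_num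
    rw [this, gb_zero, pow_zero, one_mul]
  | succ n ih =>
    rw [Finset.prod_Icc_succ_top (show (1:ℕ) ≤ n+1 from by omega),
      show 4*(n+1)-1 = 4*n+3 from by omega, show 4*(n+1)-3 = 4*n+1 from by omega,
      Ssum_succ, ← ih]
    ring
lemma dvd_coeff_eq {K : ℕ} {P Q : R2} (h : X^K ∣ P - Q) {d : ℕ} (hd : d < K) :
    P.coeff d = Q.coeff d := by
  have h0 : (P - Q).coeff d = 0 := (Polynomial.X_pow_dvd_iff.mp h) d hd
  rw [Polynomial.coeff_sub] at h0
  exact sub_eq_zero.mp h0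

lemma prod_cong_one {K : ℕ} (s : Finset ℕ) (e : ℕ → ℕ) (h : ∀ i ∈ s, K ≤ e i) :
    (X : R2)^K ∣ (∏ i ∈ s, (1 + X^(e i))) - 1 := by
  induction s using Finset.cons_induction with
  | empty => simp
  | cons a s ha ih =>
    rw [Finset.prod_cons]
    have h1 : (X:R2)^K ∣ (∏ i ∈ s, ((1:R2)+X^(e i))) - 1 :=
      ih (fun i hi => h i (Finset.mem_cons_of_mem hi))
    have h2 : ((1:R2) + X^(e a)) * (∏ i ∈ s, ((1:R2)+X^(e i))) - 1
        = ((∏ i ∈ s, ((1:R2)+X^(e i))) - 1) + X^(e a) * (∏ i ∈ s, ((1:R2)+X^(e i))) := by ring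
    rw [h2]
    exact dvd_add h1 (Dvd.dvd.mul_right (pow_dvd_pow X (h a (Finset.mem_cons_self a s))) _)

lemma mul_cong_one {K : ℕ} {P Q : R2} (hP : X^K ∣ P - 1) (hQ : X^K ∣ Q - 1) :
    (X:R2)^K ∣ P * Q - 1 := by
  have : P * Q - 1 = (P - 1) * Q + (Q - 1) := by ring
  rw [this]
  exact dvd_add (hP.mul_right _) hQ

lemma Pp_cong_one {K a c : ℕ} (h : ∀ i, a ≤ i → K ≤ 4*i) : (X:R2)^K ∣ Pp qq a c - 1 := by
  have : Pp qq a c = ∏ i ∈ Ico a c, (1 + X^(4*i)) := by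
    unfold Pp; exact Finset.prod_congr rfl (fun i _ => by rw [qq_pow])
  rw [this]
  exact prod_cong_one _ _ (fun i hi => h i (Finset.mem_Ico.mp hi).1)

lemma prod_ext (e : ℕ → ℕ) {K L L' : ℕ} (h : L ≤ L') (hK : ∀ j, L+1 ≤ j → K ≤ e j) :
    (X:R2)^K ∣ (∏ j ∈ Icc 1 L', (1 + X^(e j))) - ∏ j ∈ Icc 1 L, (1 + X^(e j)) := by
  have hsplit : (∏ j ∈ Icc 1 L, ((1:R2) + X^(e j))) * ∏ j ∈ Ico (L+1) (L'+1), ((1:R2) + X^(e j))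
      = ∏ j ∈ Icc 1 L', ((1:R2) + X^(e j)) := by
    rw [← Finset.Ico_add_one_right_eq_Icc 1 L, ← Finset.Ico_add_one_right_eq_Icc 1 L']
    exact Finset.prod_Ico_consecutive _ (by omega) (by omega)
  have h2 : (∏ j ∈ Icc 1 L', ((1:R2) + X^(e j))) - ∏ j ∈ Icc 1 L, ((1:R2) + X^(e j))
      = (∏ j ∈ Icc 1 L, ((1:R2) + X^(e j))) * ((∏ j ∈ Ico (L+1) (L'+1), ((1:R2) + X^(e j))) - 1) := by
    rw [← hsplit]; ring
  rw [h2]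
  exact Dvd.dvd.mul_left
    (prod_cong_one _ _ (fun i hi => hK i (Finset.mem_Ico.mp hi).1)) _

noncomputable def PA (L : ℕ) : R2 := ∏ j ∈ Icc 1 L, (1 + X^j)
noncomputable def PB (L : ℕ) : R2 := ∏ j ∈ Icc 1 L, (1 + X^(2*j))
noncomputable def PC (L : ℕ) : R2 := ∏ j ∈ Icc 1 L, (1 + X^(4*j))
noncomputable def PD (L : ℕ) : R2 := ∏ j ∈ Icc 1 L, ((1 + X^(4*j-1)) * (1 + X^(4*j-3)))

lemma PB_eq (L : ℕ) : PA L ^ 2 = PB L := by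
  unfold PA PB
  rw [← Finset.prod_pow]
  refine Finset.prod_congr rfl (fun j _ => ?_)
  rw [CharTwo.add_sq, one_pow, ← pow_mul, mul_comm j 2]

lemma PC_eq (L : ℕ) : PB L ^ 2 = PC L := by
  unfold PB PC
  rw [← Finset.prod_pow]
  refine Finset.prod_congr rfl (fun j _ => ?_)
  rw [CharTwo.add_sq, one_pow, ← pow_mul, show 2*j*2 = 4*j from by ring]

lemma PC_Pp (L : ℕ) : PC L = Pp qq 1 (L+1) := by
  unfold PC Pp
  rw [← Finset.Ico_add_one_right_eq_Icc]
  exact Finset.prod_congr rfl (fun j _ => by rw [qq_pow])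

lemma PD_eq : ∀ T, PA (4*T) = PD T * PB (2*T) := by
  intro T
  induction T with
  | zero => simp [PA, PD, PB]
  | succ T ih =>
    have e1 : PA (4*(T+1)) = PA (4*T) * ((1 + X^(4*T+1)) * (1 + X^(4*T+2))
        * (1 + X^(4*T+3)) * (1 + X^(4*T+4))) := by
      unfold PA
      rw [show 4*(T+1) = (4*T+3)+1 from by ring,
        Finset.prod_Icc_succ_top (show (1:ℕ) ≤ 4*T+3+1 from by omega),
        show (4*T+3 : ℕ) = (4*T+2)+1 from by ring,
        Finset.prod_Icc_succ_top (show (1:ℕ) ≤ 4*T+2+1 from by omega),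
        show (4*T+2 : ℕ) = (4*T+1)+1 from by ring,
        Finset.prod_Icc_succ_top (show (1:ℕ) ≤ 4*T+1+1 from by omega),
        show (4*T+1 : ℕ) = (4*T)+1 from by ring,
        Finset.prod_Icc_succ_top (show (1:ℕ) ≤ 4*T+1 from by omega)]
      ring
    have e2 : PD (T+1) = PD T * ((1 + X^(4*T+3)) * (1 + X^(4*T+1))) := by
      unfold PD
      rw [Finset.prod_Icc_succ_top (show (1:ℕ) ≤ T+1 from by omega),
        show 4*(T+1)-1 = 4*T+3 from by omega, show 4*(T+1)-3 = 4*T+1 from by omega]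
    have e3 : PB (2*(T+1)) = PB (2*T) * ((1 + X^(4*T+2)) * (1 + X^(4*T+4))) := by
      unfold PB
      rw [show 2*(T+1) = (2*T+1)+1 from by ring,
        Finset.prod_Icc_succ_top (show (1:ℕ) ≤ 2*T+1+1 from by omega),
        show (2*T+1 : ℕ) = (2*T)+1 from by ring,
        Finset.prod_Icc_succ_top (show (1:ℕ) ≤ 2*T+1 from by omega),
        show 2*(2*T+1) = 4*T+2 from by ring, show 2*(2*T+1+1) = 4*T+4 from by ring]
      ring
    rw [e1, e2, e3, ih]
    ring

lemma tE_inj (b : ℕ) : ∀ a a' : ℕ, tE b a = tE b a' → a = a' := by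
  intro a a' h
  have hz : 2*((a:ℤ)-b)^2 + a = 2*((a':ℤ)-b)^2 + a' := by
    rw [← tE_cast, ← tE_cast, h]
  have hfac : ((a:ℤ) - a') * (2*a + 2*a' - 4*b + 1) = 0 := by linear_combination hz
  rcases mul_eq_zero.mp hfac with h1 | h2
  · have : (a:ℤ) = a' := by linarith
    exact_mod_cast this
  · omega

theorem coeffG (n m : ℕ) (hm : m ≤ n) :
    ((∏ j ∈ Icc 1 n, ((1 + X^j) * (1 + X^(2*j))) : R2).coeff m = 1)
      ↔ ∃ k : ℤ, (m : ℤ) = 2*k^2 + k := by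
  set b := 2*m+2 with hb
  set G : R2 := ∏ j ∈ Icc 1 n, ((1 + X^j) * (1 + X^(2*j))) with hG
  -- step 1 : G = PA n ^ 3
  have hG3 : G = PA n ^ 3 := by
    rw [hG, Finset.prod_mul_distrib]
    have : (∏ j ∈ Icc 1 n, ((1:R2) + X^(2*j))) = PB n := rfl
    rw [this, ← PB_eq]
    show PA n * PA n ^2 = _
    ring
  -- step 2 : congruence G ≡ PD b * PC (2*b)  mod X^(m+1)
  have hPA : (X:R2)^(m+1) ∣ PA n - PA (4*b) := by
    rcases le_total n (4*b) with h | h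
    · have h1 : (X:R2)^(m+1) ∣ PA (4*b) - PA n :=
        prod_ext (fun j => j) (K := m+1) h (fun j hj => (by omega : m+1 ≤ j))
      rw [show PA n - PA (4*b) = -(PA (4*b) - PA n) from by ring]
      exact dvd_neg.mpr h1
    · exact prod_ext (fun j => j) (K := m+1) h (fun j hj => (by omega : m+1 ≤ j))
  have hPB : (X:R2)^(m+1) ∣ PB (4*b) - PB (2*b) :=
    prod_ext (fun j => 2*j) (K := m+1) (by omega) (fun j hj => (by omega : m+1 ≤ 2*j))
  have hchain : (X:R2)^(m+1) ∣ G - PD b * PC (2*b) := by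
    have k1 : G - PD b * PC (2*b)
        = (PA n - PA (4*b)) * (PA n^2 + PA n * PA (4*b) + PA (4*b)^2)
          + (PD b * PB (2*b)) * (PB (4*b) - PB (2*b)) := by
      rw [hG3]
      have h1 : PA (4*b) = PD b * PB (2*b) := PD_eq b
      have h2 : PA (4*b) ^ 3 = PD b * PB (2*b) * PB (4*b) := by
        rw [show (PA (4*b))^3 = PA (4*b) * (PA (4*b))^2 from by ring, PB_eq, h1]
      have h3 : PD b * PB (2*b) * PB (2*b) = PD b * PC (2*b) := by
        rw [← PC_eq]; ring
      calc PA n ^3 - PD b * PC (2*b)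
          = (PA n^3 - PA (4*b)^3) + (PA (4*b)^3 - PD b * PC (2*b)) := by ring
        _ = (PA n^3 - PA (4*b)^3) + (PD b * PB (2*b) * PB (4*b) - PD b * PB (2*b) * PB (2*b)) := by
            rw [h2, h3]
        _ = (PA n - PA (4*b)) * (PA n^2 + PA n * PA (4*b) + PA (4*b)^2)
          + (PD b * PB (2*b)) * (PB (4*b) - PB (2*b)) := by ring
    rw [k1]
    exact dvd_add (hPA.mul_right _) (hPB.mul_left _)
  -- step 3 : multiply by X^b and use phi
  have hXb : (X:R2)^(m+b+1) ∣ X^b * G - Ssum b * PC (2*b) := by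
    have h1 : (X:R2)^(m+b+1) = X^b * X^(m+1) := by rw [← pow_add]; congr 1; omega
    have h2 : X^b * G - Ssum b * PC (2*b) = X^b * (G - PD b * PC (2*b)) := by
      rw [← phi b]
      have : (X:R2)^b * ∏ j ∈ Icc 1 b, ((1 + X^(4*j-1)) * (1 + X^(4*j-3)))
          = X^b * PD b := rfl
      rw [this]
      ring
    rw [h1, h2]
    exact mul_dvd_mul_left _ hchain
  -- step 4 : pruning
  set TT : R2 := ∑ m' ∈ range (2*b+1), (if tE b m' ≤ m + b then X^(tE b m') else 0) with hTT
  have hprune : (X:R2)^(m+b+1) ∣ Ssum b * PC (2*b) - TT := by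
    unfold Ssum
    rw [Finset.sum_mul, hTT, ← Finset.sum_sub_distrib]
    apply Finset.dvd_sum
    intro m' hm'
    rw [Finset.mem_range] at hm'
    by_cases hle : tE b m' ≤ m + b
    · rw [if_pos hle]
      -- bound |m' - b| ≤ m
      have hc := tE_cast b m'
      have hd : 2*((m':ℤ)-b)^2 + ((m':ℤ)-b) ≤ m := by
        have : (tE b m' : ℤ) ≤ (m:ℤ) + b := by exact_mod_cast hle
        rw [hc] at this
        push_cast at this ⊢
        linarith
      have hdle : ((m':ℤ)-b) ≤ m := by nlinarith [sq_nonneg ((m':ℤ)-b)]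
      have hdge : -((m:ℤ)) ≤ ((m':ℤ)-b) := by
        rcases le_or_gt 0 ((m':ℤ)-b) with h0 | h0
        · have : (0:ℤ) ≤ m := Int.natCast_nonneg m
          linarith
        · have hkk : 0 ≤ (-((m':ℤ)-b)) * (-(((m':ℤ)-b)+1)) :=
            mul_nonneg (by omega) (by omega)
          nlinarith
      have hm1 : m + 2 ≤ m' := by
        have : ((m:ℤ)+2) ≤ m' := by push_cast at hdge ⊢; omega
        exact_mod_cast this
      have hm2 : m' ≤ b + m := by
        have : (m':ℤ) ≤ (b:ℤ) + m := by push_cast at hdle ⊢; omega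
        exact_mod_cast this
      have hmb : m' ≤ 2*b := by omega
      -- gb * PC ≡ 1
      have key : (X:R2)^(m+b+1) ∣ gb qq (2*b) m' * PC (2*b) - 1 := by
        have hsplit : Pp qq 1 (2*b+1) = Pp qq 1 (m'+1) * Pp qq (m'+1) (2*b+1) := by
          unfold Pp
          rw [Finset.prod_Ico_consecutive _ (by omega : 1 ≤ m'+1) (by omega : m'+1 ≤ 2*b+1)]
        have hgb : gb qq (2*b) m' * Pp qq 1 (m'+1) = Pp qq (2*b-m'+1) (2*b+1) :=
          gbProd qq (2*b) m' hmb
        have e1 : gb qq (2*b) m' * PC (2*b)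
            = Pp qq (2*b-m'+1) (2*b+1) * Pp qq (m'+1) (2*b+1) := by
          rw [PC_Pp, hsplit, ← hgb]; ring
        rw [e1]
        apply mul_cong_one
        · exact Pp_cong_one (by intro i hi; omega)
        · exact Pp_cong_one (by intro i hi; omega)
      have e2 : X^(tE b m') * gb qq (2*b) m' * PC (2*b) - X^(tE b m')
          = X^(tE b m') * (gb qq (2*b) m' * PC (2*b) - 1) := by ring
      rw [e2]
      exact key.mul_left _
    · rw [if_neg hle, sub_zero]
      have h1 : (X:R2)^(m+b+1) ∣ X^(tE b m') := pow_dvd_pow X (by omega)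
      exact (h1.mul_right _).mul_right _
  -- step 5 : coefficient extraction
  have hcoeff : G.coeff m = TT.coeff (m+b) := by
    have e1 : G.coeff m = (X^b * G).coeff (m+b) := (Polynomial.coeff_X_pow_mul G b m).symm
    rw [e1, dvd_coeff_eq hXb (by omega), dvd_coeff_eq hprune (by omega)]
  have hTTcoeff : TT.coeff (m+b)
      = ((Finset.filter (fun m' => tE b m' = m + b) (range (2*b+1))).card : ZMod 2) := by
    have e : ∀ m' ∈ range (2*b+1),
        ((if tE b m' ≤ m + b then (X:R2)^(tE b m') else 0)).coeff (m+b)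
          = if tE b m' = m + b then (1:ZMod 2) else 0 := by
      intro m' _
      by_cases hle : tE b m' ≤ m + b
      · rw [if_pos hle, Polynomial.coeff_X_pow]
        by_cases he : tE b m' = m + b
        · rw [if_pos he.symm, if_pos he]
        · rw [if_neg (fun hh => he hh.symm), if_neg he]
      · rw [if_neg hle, Polynomial.coeff_zero, if_neg (by omega)]
    rw [hTT, Polynomial.finset_sum_coeff, Finset.sum_congr rfl e, Finset.sum_boole]
  have hcard1 : (Finset.filter (fun m' => tE b m' = m + b) (range (2*b+1))).card ≤ 1 := by
    apply Finset.card_le_one.mpr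
    intro a ha a' ha'
    rw [Finset.mem_filter] at ha ha'
    exact tE_inj b a a' (by rw [ha.2, ha'.2])
  rw [hcoeff, hTTcoeff]
  constructor
  · intro h
    have hpos : 0 < (Finset.filter (fun m' => tE b m' = m + b) (range (2*b+1))).card := by
      rcases Nat.eq_zero_or_pos (Finset.filter (fun m' => tE b m' = m + b)
        (range (2*b+1))).card with h0 | hp
      · rw [h0] at h; simp at h
      · exact hp
    obtain ⟨m', hm'⟩ := Finset.card_pos.mp hpos
    rw [Finset.mem_filter, Finset.mem_range] at hm'
    obtain ⟨hrange, heq⟩ := hm'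
    refine ⟨(m' : ℤ) - b, ?_⟩
    have hc := tE_cast b m'
    have h2 : (tE b m' : ℤ) = (m : ℤ) + b := by exact_mod_cast congrArg (Nat.cast : ℕ → ℤ) heq
    rw [hc] at h2
    linarith
  · rintro ⟨k, hk⟩
    have hk1 : k ≤ (m:ℤ) := by nlinarith [sq_nonneg k]
    have hk2 : -(m:ℤ) ≤ k := by
      rcases le_or_gt 0 k with h0 | h0
      · have : (0:ℤ) ≤ m := Int.natCast_nonneg m
        linarith
      · have hkk : 0 ≤ (-k) * (-(k+1)) := mul_nonneg (by omega) (by omega)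
        nlinarith
    have hbk : (0:ℤ) ≤ (b:ℤ) + k := by
      have : ((2*m+2 : ℕ):ℤ) = 2*(m:ℤ)+2 := by push_cast; ring
      rw [hb]; omega
    set m' : ℕ := ((b:ℤ) + k).toNat with hm'
    have hcast : ((m':ℕ):ℤ) = (b:ℤ) + k := Int.toNat_of_nonneg hbk
    have hmem : m' ∈ range (2*b+1) := by
      rw [Finset.mem_range]
      have h2 : ((m':ℕ):ℤ) ≤ 2*(b:ℤ) := by rw [hcast]; omega
      have h3 : (m':ℕ) ≤ 2*b := by exact_mod_cast h2
      omega
    have heq : tE b m' = m + b := by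
      have h2 : (tE b m' : ℤ) = ((m + b : ℕ) : ℤ) := by
        rw [tE_cast, hcast]
        push_cast
        linear_combination -hk
      exact_mod_cast h2
    have hfil : m' ∈ Finset.filter (fun m' => tE b m' = m + b) (range (2*b+1)) :=
      Finset.mem_filter.mpr ⟨hmem, heq⟩
    have hpos : 0 < (Finset.filter (fun m' => tE b m' = m + b) (range (2*b+1))).card :=
      Finset.card_pos.mpr ⟨m', hfil⟩
    have hcc : (Finset.filter (fun m' => tE b m' = m + b) (range (2*b+1))).card = 1 := by omega
    rw [hcc]
    norm_num
lemma expand_two (f : R2) : Polynomial.expand (ZMod 2) 2 f = f^2 := by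
  haveI : Fact (Nat.Prime 2) := ⟨Nat.prime_two⟩
  have h := Polynomial.map_frobenius_expand 2 f
  rwa [show frobenius (ZMod 2) 2 = RingHom.id (ZMod 2) from
      RingHom.ext fun a => by simp [frobenius_def, ZMod.pow_card], Polynomial.map_id] at h

lemma expand_eight (f : R2) : Polynomial.expand (ZMod 2) 8 f = f^8 := by
  have : Polynomial.expand (ZMod 2) 8 f
      = Polynomial.expand (ZMod 2) 2 (Polynomial.expand (ZMod 2) 2
          (Polynomial.expand (ZMod 2) 2 f)) := by
    rw [Polynomial.expand_expand, Polynomial.expand_expand]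
  rw [this, expand_two, expand_two, expand_two, ← pow_mul, ← pow_mul]

lemma cube (j : ℕ) : ((1:R2) + X^j)^3 = (1 + X^j) * (1 + X^(2*j)) := by
  have h2 : ((1:R2) + X^j)^2 = 1 + X^(2*j) := by
    rw [CharTwo.add_sq, one_pow, ← pow_mul, mul_comm j 2]
  calc ((1:R2) + X^j)^3 = (1 + X^j) * (1 + X^j)^2 := by ring
    _ = (1 + X^j) * (1 + X^(2*j)) := by rw [h2]

lemma map_delta (n : ℕ) :
    Polynomial.map (Int.castRingHom (ZMod 2)) (X * ∏ j ∈ Icc 1 n, (1 - X^j)^24)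
      = X * Polynomial.expand (ZMod 2) 8 (∏ j ∈ Icc 1 n, ((1 + X^j) * (1 + X^(2*j)))) := by
  rw [Polynomial.map_mul, Polynomial.map_X, Polynomial.map_prod, map_prod]
  congr 1
  refine Finset.prod_congr rfl (fun j _ => ?_)
  rw [Polynomial.map_pow, Polynomial.map_sub, Polynomial.map_one, Polynomial.map_pow,
    Polynomial.map_X, CharTwo.sub_eq_add, ← cube, expand_eight, ← pow_mul]

lemma odd_int_iff (z : ℤ) : Odd z ↔ ((z : ZMod 2) = 1) := by
  constructor
  · rintro ⟨c, rfl⟩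
    push_cast
    rw [show ((2:ZMod 2)) = 0 from rfl, zero_mul, zero_add]
  · intro h
    by_contra hodd
    rw [Int.not_odd_iff_even] at hodd
    obtain ⟨c, rfl⟩ := hodd
    push_cast at h
    rw [CharTwo.add_self_eq_zero] at h
    exact zero_ne_one h

lemma oddsq8 {n : ℕ} (ho : Odd n) (hsq : IsSquare n) : 8 ∣ (n - 1) := by
  obtain ⟨r, hr⟩ := hsq
  have hodr : Odd r := by
    rcases Nat.even_or_odd r with he | hok
    · exfalso
      have : Even n := by rw [hr]; exact he.mul_right r
      exact (Nat.not_odd_iff_even.mpr this) ho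
    · exact hok
  obtain ⟨t, ht⟩ := hodr
  have h1 : n = 4*(t*(t+1)) + 1 := by rw [hr, ht]; ring
  obtain ⟨u, hu⟩ := Nat.even_mul_succ_self t
  omega

lemma arith_main (n m : ℕ) (h : n = 8*m+1) :
    (∃ k : ℤ, (m:ℤ) = 2*k^2 + k) ↔ Odd n ∧ IsSquare n := by
  constructor
  · rintro ⟨k, hk⟩
    constructor
    · rw [Nat.odd_iff]; omega
    · have hn : (n:ℤ) = (4*k+1) * (4*k+1) := by
        have : (n:ℤ) = 8*(m:ℤ)+1 := by exact_mod_cast congrArg (Nat.cast : ℕ → ℤ) h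
        rw [this]
        linear_combination 8*hk
      refine ⟨(4*k+1).natAbs, ?_⟩
      have h2 : ((4*k+1).natAbs * (4*k+1).natAbs : ℤ) = (n:ℤ) := by
        rw [Int.natAbs_mul_self', ← hn]
      exact_mod_cast h2.symm
  · rintro ⟨ho, hsq⟩
    obtain ⟨r, hr⟩ := hsq
    have hodr : Odd r := by
      rcases Nat.even_or_odd r with he | hok
      · exfalso
        have : Even n := by rw [hr]; exact he.mul_right r
        exact (Nat.not_odd_iff_even.mpr this) ho
      · exact hok
    obtain ⟨t, ht⟩ := hodr
    have hz : (8:ℤ)*m + 1 = (2*(t:ℤ)+1)^2 := by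
      have h1 : (n:ℤ) = 8*(m:ℤ)+1 := by exact_mod_cast congrArg (Nat.cast : ℕ → ℤ) h
      have h2 : (n:ℤ) = ((r:ℤ))*r := by exact_mod_cast congrArg (Nat.cast : ℕ → ℤ) hr
      have h3 : (r:ℤ) = 2*t+1 := by exact_mod_cast congrArg (Nat.cast : ℕ → ℤ) ht
      rw [← h1, h2, h3]; ring
    have key : 2*(m:ℤ) = t^2 + t := by
      have h4 : (4:ℤ) * (2*(m:ℤ)) = 4 * (t^2 + t) := by linear_combination hz
      exact Int.eq_of_mul_eq_mul_left (by norm_num) h4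
    rcases Int.even_or_odd t with ⟨a, ha⟩ | ⟨a, ha⟩
    · refine ⟨a, ?_⟩
      have h5 : (2:ℤ) * (m:ℤ) = 2 * (2*a^2 + a) := by rw [ha] at key; linear_combination key
      exact Int.eq_of_mul_eq_mul_left (by norm_num) h5
    · refine ⟨-(a+1), ?_⟩
      have h5 : (2:ℤ) * (m:ℤ) = 2 * (2*(-(a+1))^2 + (-(a+1))) := by
        rw [ha] at key; linear_combination key
      exact Int.eq_of_mul_eq_mul_left (by norm_num) h5

end RamanujanAux

/-- Ramanujan's tau function: for `n ≥ 1`, `τ(n)` is the coefficient of `X^n`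
in `X · ∏_{j=1}^{n} (1 - X^j)^24 ∈ ℤ[X]`. -/
noncomputable def ramanujanTau (n : ℕ) : ℤ :=
  ((Polynomial.X * ∏ j ∈ Finset.Icc 1 n, (1 - Polynomial.X ^ j) ^ 24 :
    Polynomial ℤ)).coeff n

/-- Ramanujan: `τ(n)` is odd if and only if `n` is an odd perfect square. -/
theorem ramanujanTau_odd_iff (n : ℕ) (hn : 0 < n) :
    Odd (ramanujanTau n) ↔ Odd n ∧ IsSquare n := by
  obtain ⟨d, rfl⟩ : ∃ d, n = d + 1 := ⟨n-1, by omega⟩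
  rw [RamanujanAux.odd_int_iff]
  unfold ramanujanTau
  rw [show (((Polynomial.X * ∏ j ∈ Finset.Icc 1 (d+1), (1 - Polynomial.X ^ j) ^ 24 :
      Polynomial ℤ)).coeff (d+1) : ZMod 2)
    = (Polynomial.map (Int.castRingHom (ZMod 2))
        (Polynomial.X * ∏ j ∈ Finset.Icc 1 (d+1), (1 - Polynomial.X ^ j) ^ 24)).coeff (d+1) from by
      rw [Polynomial.coeff_map]; rfl]
  rw [RamanujanAux.map_delta (d+1), Polynomial.coeff_X_mul,
    Polynomial.coeff_expand (by norm_num : 0 < 8)]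
  by_cases h8 : 8 ∣ d
  · rw [if_pos h8]
    rw [RamanujanAux.coeffG (d+1) (d/8) (by omega)]
    refine RamanujanAux.arith_main (d+1) (d/8) ?_
    obtain ⟨u, hu⟩ := h8
    omega
  · rw [if_neg h8]
    constructor
    · intro h
      exact absurd h (by decide)
    · rintro ⟨ho, hsq⟩
      exact absurd (RamanujanAux.oddsq8 ho hsq) h8
end
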